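/- arXiv:2104.07274 — 3 statements merged into one kernel-verified Lean document; each statement's English description precedes it below -/
import Mathlib

section
/- Two compositions a and a' are dominating equivalent if and only if they are h-dominating equivalent; i.e., |D_n(a)| = |D_n(a')| for all n ≥ 1 if and only if |D_n^h(a)| = |D_n^h(a')| for all n ≥ 1. -/
/-- `l` is a composition of `n`: a list of positive integers summing to `n`. -/
def IsComposition (n : ℕ) (l : List ℕ) : Prop :=
  (∀ x ∈ l, 0 < x) ∧ l.sum = n

/-- `b` dominates `a`: `b` has a subsequence whose terms are entrywise at least those of `a`. -/
def Dominates (b a : List ℕ) : Prop :=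
  ∃ b' : List ℕ, b'.Sublist b ∧ List.Forall₂ (· ≤ ·) a b'

/-- `D_n(a)`: the set of compositions of `n` dominating `a`. -/
def domSet (n : ℕ) (a : List ℕ) : Set (List ℕ) :=
  {b | IsComposition n b ∧ Dominates b a}

/-- `b` h-dominates `a`: `b` dominates `a` and either `b` has one term or
its proper prefix (dropping the last term) does not dominate `a`. -/
def HDominates (b a : List ℕ) : Prop :=
  Dominates b a ∧ (b.length = 1 ∨ ¬ Dominates b.dropLast a)

/-- `D_n^h(a)`: the set of compositions of `n` h-dominating `a`. -/
def hdomSet (n : ℕ) (a : List ℕ) : Set (List ℕ) :=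
  {b | IsComposition n b ∧ HDominates b a}

/-!
A composition `b` dominating `a ≠ []` splits uniquely as `p ++ s`, where `p` is the shortest
prefix of `b` dominating `a` (precisely an h-dominating composition) and `s` is an arbitrary
composition. Hence `|D_n(a)| = ∑_{i+j=n} |D_i^h(a)| c_j` with `c_j` the number of compositions
of `j`. Since `c_0 = 1` and `D_0^h(a) = ∅`, this triangular system determines the h-dominating
counts from the dominating counts and conversely.
-/

open Finset

section Convolution

variable {R : Type*} [Semiring R] [IsRightCancelAdd R]

theorem sum_antidiagonal_mul_eq_iff {f g c : ℕ → R} (hc : c 0 = 1) (h0 : f 0 = g 0) :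
    (∀ n, 0 < n → ∑ p ∈ antidiagonal n, f p.1 * c p.2 = ∑ p ∈ antidiagonal n, g p.1 * c p.2) ↔
      ∀ n, 0 < n → f n = g n := by
  constructor
  · intro h n hn
    induction n using Nat.strong_induction_on with
    | _ n ih =>
      obtain ⟨n, rfl⟩ := Nat.exists_eq_add_one_of_ne_zero hn.ne'
      have hle : ∀ m ≤ n, f m = g m := fun m hm =>
        m.eq_zero_or_pos.elim (fun hm0 => hm0 ▸ h0) (ih m (by omega))
      have hsum := h (n + 1) hn
      rw [Nat.sum_antidiagonal_succ', Nat.sum_antidiagonal_succ', hc, mul_one, mul_one,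
        sum_congr rfl fun p hp => by rw [hle p.1 (HasAntidiagonal.antidiagonal.fst_le hp)]] at hsum
      exact add_right_cancel hsum
  · intro h n _
    obtain rfl : f = g := funext fun m => m.eq_zero_or_pos.elim (fun hm0 => hm0 ▸ h0) (h m)
    rfl

end Convolution

theorem isComposition_zero_iff {l : List ℕ} : IsComposition 0 l ↔ l = [] := by
  refine ⟨fun ⟨hpos, hsum⟩ => ?_, fun h => by simp [h, IsComposition]⟩
  exact List.eq_nil_iff_forall_not_mem.2 fun x hx =>
    (hpos x hx).ne' (Nat.eq_zero_of_le_zero (hsum ▸ List.le_sum_of_mem hx))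

theorem isComposition_append_iff {n : ℕ} {p s : List ℕ} :
    IsComposition n (p ++ s) ↔
      IsComposition p.sum p ∧ IsComposition s.sum s ∧ p.sum + s.sum = n := by
  simp only [IsComposition, List.mem_append, or_imp, forall_and, List.sum_append, and_true,
    and_assoc]

noncomputable def compositionFinset (n : ℕ) : Finset (List ℕ) :=
  univ.image (Composition.blocks (n := n))

theorem mem_compositionFinset {n : ℕ} {l : List ℕ} :
    l ∈ compositionFinset n ↔ IsComposition n l := by
  simp only [compositionFinset, mem_image, mem_univ, true_and]
  exact ⟨fun ⟨c, hc⟩ => hc ▸ ⟨fun _ => c.blocks_pos, c.blocks_sum⟩,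
    fun ⟨hpos, hsum⟩ => ⟨⟨l, hpos _, hsum⟩, rfl⟩⟩

theorem compositionFinset_zero : compositionFinset 0 = {[]} := by
  ext l
  rw [mem_compositionFinset, isComposition_zero_iff, mem_singleton]

theorem not_dominates_nil {a : List ℕ} (ha : a ≠ []) : ¬ Dominates [] a := by
  rintro ⟨b', hb', hab'⟩
  rw [List.sublist_nil.1 hb', List.forall₂_nil_right_iff] at hab'
  exact ha hab'

theorem Dominates.mono {a b c : List ℕ} (h : Dominates b a) (hbc : b.Sublist c) :
    Dominates c a :=
  let ⟨b', hb', hab'⟩ := h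
  ⟨b', hb'.trans hbc, hab'⟩

theorem HDominates.ne_nil {a b : List ℕ} (ha : a ≠ []) (h : HDominates b a) : b ≠ [] := by
  rintro rfl
  exact not_dominates_nil ha h.1

theorem HDominates.eq_of_prefix {a p q : List ℕ} (ha : a ≠ []) (hp : HDominates p a)
    (hq : HDominates q a) (hpq : p <+: q) : p = q := by
  obtain ⟨t, rfl⟩ := hpq
  rcases eq_or_ne t [] with rfl | ht
  · exact (List.append_nil p).symm
  exfalso
  rcases hq.2 with hlen | hdrop
  · have := List.length_pos_of_ne_nil (hp.ne_nil ha)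
    have := List.length_pos_of_ne_nil ht
    simp only [List.length_append] at hlen
    omega
  · rw [List.dropLast_append_of_ne_nil ht] at hdrop
    exact hdrop (hp.1.mono (List.sublist_append_left _ _))

theorem HDominates.eq_of_append_eq {a p s q t : List ℕ} (ha : a ≠ []) (hp : HDominates p a)
    (hq : HDominates q a) (h : p ++ s = q ++ t) : p = q := by
  rcases List.prefix_or_prefix_of_prefix (h ▸ List.prefix_append p s) (List.prefix_append q t)
    with hpq | hqp
  · exact hp.eq_of_prefix ha hq hpq
  · exact (hq.eq_of_prefix ha hp hqp).symm

theorem Dominates.exists_hDominates_append {a b : List ℕ} (ha : a ≠ []) (h : Dominates b a) :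
    ∃ p s, HDominates p a ∧ b = p ++ s := by
  induction b using List.reverseRecOn with
  | nil => exact absurd h (not_dominates_nil ha)
  | append_singleton b x ih =>
    by_cases hb : Dominates b a
    · obtain ⟨p, s, hp, rfl⟩ := ih hb
      exact ⟨p, s ++ [x], hp, List.append_assoc _ _ _⟩
    · exact ⟨b ++ [x], [], ⟨h, Or.inr (by rwa [List.dropLast_concat])⟩, (List.append_nil _).symm⟩

section Counting

open scoped Classical

noncomputable def domFinset (n : ℕ) (a : List ℕ) : Finset (List ℕ) :=
  (compositionFinset n).filter (Dominates · a)

noncomputable def hdomFinset (n : ℕ) (a : List ℕ) : Finset (List ℕ) :=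
  (compositionFinset n).filter (HDominates · a)

variable {a : List ℕ}

theorem mem_domFinset {n : ℕ} {b : List ℕ} :
    b ∈ domFinset n a ↔ IsComposition n b ∧ Dominates b a := by
  rw [domFinset, mem_filter, mem_compositionFinset]

theorem mem_hdomFinset {n : ℕ} {b : List ℕ} :
    b ∈ hdomFinset n a ↔ IsComposition n b ∧ HDominates b a := by
  rw [hdomFinset, mem_filter, mem_compositionFinset]

theorem ncard_domSet (n : ℕ) : (domSet n a).ncard = #(domFinset n a) := by
  rw [← Set.ncard_coe_finset, show (domFinset n a : Set (List ℕ)) = domSet n a from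
    Set.ext fun _ => mem_domFinset]

theorem ncard_hdomSet (n : ℕ) : (hdomSet n a).ncard = #(hdomFinset n a) := by
  rw [← Set.ncard_coe_finset, show (hdomFinset n a : Set (List ℕ)) = hdomSet n a from
    Set.ext fun _ => mem_hdomFinset]

theorem hdomFinset_zero (ha : a ≠ []) : hdomFinset 0 a = ∅ := by
  rw [hdomFinset, compositionFinset_zero, filter_singleton, if_neg fun h => h.ne_nil ha rfl]

theorem domFinset_eq_image_sigma (ha : a ≠ []) (n : ℕ) :
    domFinset n a =
      ((antidiagonal n).sigma fun k => hdomFinset k.1 a ×ˢ compositionFinset k.2).image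
        fun x => x.2.1 ++ x.2.2 := by
  ext b
  simp only [mem_domFinset, mem_image, mem_sigma, mem_product, mem_hdomFinset,
    mem_compositionFinset, HasAntidiagonal.mem_antidiagonal, Sigma.exists, Prod.exists]
  constructor
  · rintro ⟨hb, hdom⟩
    obtain ⟨p, s, hp, rfl⟩ := hdom.exists_hDominates_append ha
    obtain ⟨hpc, hsc, hsum⟩ := isComposition_append_iff.1 hb
    exact ⟨p.sum, s.sum, p, s, ⟨hsum, ⟨hpc, hp⟩, hsc⟩, rfl⟩
  · rintro ⟨k, m, p, s, ⟨hsum, ⟨hpc, hp⟩, hsc⟩, rfl⟩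
    refine ⟨isComposition_append_iff.2 ⟨?_, ?_, ?_⟩, hp.1.mono (List.sublist_append_left _ _)⟩
    · rwa [hpc.2]
    · rwa [hsc.2]
    · rw [hpc.2, hsc.2, hsum]

theorem card_domFinset (ha : a ≠ []) (n : ℕ) :
    #(domFinset n a) = ∑ k ∈ antidiagonal n, #(hdomFinset k.1 a) * #(compositionFinset k.2) := by
  rw [domFinset_eq_image_sigma ha, card_image_of_injOn, card_sigma]
  · simp only [card_product]
  rintro ⟨⟨i, j⟩, p, s⟩ hx ⟨⟨i', j'⟩, q, t⟩ hy (h : p ++ s = q ++ t)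
  simp only [coe_sigma, Set.mem_sigma_iff, coe_product, Set.mem_prod, mem_coe, mem_hdomFinset,
    mem_compositionFinset] at hx hy
  obtain rfl := hx.2.1.2.eq_of_append_eq ha hy.2.1.2 h
  obtain rfl := List.append_cancel_left h
  rw [← hx.2.1.1.2, ← hx.2.2.2, ← hy.2.1.1.2, ← hy.2.2.2]

end Counting

theorem domEquiv_iff_hdomEquiv_general (a a' : List ℕ)
    (hane : a ≠ []) (ha'ne : a' ≠ []) :
    (∀ n : ℕ, 0 < n → (domSet n a).ncard = (domSet n a').ncard) ↔
      (∀ n : ℕ, 0 < n → (hdomSet n a).ncard = (hdomSet n a').ncard) := by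
  simp only [ncard_domSet, ncard_hdomSet, card_domFinset hane, card_domFinset ha'ne]
  refine sum_antidiagonal_mul_eq_iff (f := fun k => #(hdomFinset k a))
    (g := fun k => #(hdomFinset k a')) (c := fun k => #(compositionFinset k)) ?_ ?_
  · rw [compositionFinset_zero, card_singleton]
  · simp only [hdomFinset_zero hane, hdomFinset_zero ha'ne]

theorem domEquiv_iff_hdomEquiv (a a' : List ℕ)
    (ha : ∀ x ∈ a, 0 < x) (ha' : ∀ x ∈ a', 0 < x)
    (hane : a ≠ []) (ha'ne : a' ≠ []) :
    (∀ n : ℕ, 0 < n → (domSet n a).ncard = (domSet n a').ncard) ↔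
      (∀ n : ℕ, 0 < n → (hdomSet n a).ncard = (hdomSet n a').ncard) :=
  domEquiv_iff_hdomEquiv_general a a' hane ha'ne
end

section
/- Let a = (a_1,...,a_m) be a composition of n with a_1 ≥ a_2 ≥ ... ≥ a_m, a_{m-1} ≥ 2 (if m ≥ 2), and a_m = 1. Then |D_{n+1}(a)| = 2m. -/
/-!
If `b` is a composition of `n + 1` dominating the composition `a` of `n`, the witnessing
subsequence `b'` satisfies `n = a.sum ≤ b'.sum ≤ b.sum = n + 1`. If `b'.sum = n` then `b' = a`
and `b` is `a` with an entry `1` inserted; if `b'.sum = n + 1` then `b' = b` and `b` is `a`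
with one entry raised by one. The `m` raisings are distinct lists of length `m`; the insertions
have length `m + 1`, and those at positions `0, …, m - 1` are distinct because every entry
but the last is at least `2`, while inserting after the final `1` repeats inserting before it.
-/

namespace List

variable {α : Type*}

theorem Forall₂.eq_of_sum_le {a b : List ℕ} (h : Forall₂ (· ≤ ·) a b) (hs : b.sum ≤ a.sum) :
    a = b := by
  induction h with
  | nil => rfl
  | @cons x y a b hxy hab ih =>
    have := hab.sum_le_sum
    simp only [sum_cons] at hs
    rw [show x = y by omega, ih (by omega)]

theorem Sublist.eq_of_sum_le {a b : List ℕ} (h : a <+ b) (hpos : ∀ x ∈ b, 0 < x)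
    (hs : b.sum ≤ a.sum) : a = b := by
  induction h with
  | slnil => rfl
  | @cons a b x hab _ =>
    have := hab.sum_le_sum (fun _ _ => Nat.zero_le _)
    have := hpos x mem_cons_self
    simp only [sum_cons] at hs
    omega
  | @cons_cons a b x _ ih =>
    simp only [sum_cons] at hs
    rw [ih (fun y hy => hpos y (mem_cons_of_mem x hy)) (by omega)]

theorem Forall₂.exists_eq_modify_of_sum_eq_succ {a b : List ℕ} (h : Forall₂ (· ≤ ·) a b)
    (hs : b.sum = a.sum + 1) : ∃ i < a.length, b = a.modify i (· + 1) := by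
  induction h with
  | nil => simp at hs
  | @cons x y a b hxy hab ih =>
    simp only [sum_cons] at hs
    by_cases hxy' : x = y
    · subst hxy'
      obtain ⟨i, hi, rfl⟩ := ih (by omega)
      exact ⟨i + 1, by simpa using hi, by simp⟩
    · have := hab.sum_le_sum
      rw [hab.eq_of_sum_le (by omega)]
      exact ⟨0, by simp, by simp only [modify_zero_cons, cons.injEq, and_true]; omega⟩

theorem Sublist.exists_eq_insertIdx_of_sum_eq_succ {a b : List ℕ} (h : a <+ b)
    (hpos : ∀ x ∈ b, 0 < x) (hs : b.sum = a.sum + 1) : ∃ i ≤ a.length, b = a.insertIdx i 1 := by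
  induction h with
  | slnil => simp at hs
  | @cons a b x hab _ =>
    have := hab.sum_le_sum (fun _ _ => Nat.zero_le _)
    have := hpos x mem_cons_self
    simp only [sum_cons] at hs
    rw [hab.eq_of_sum_le (fun y hy => hpos y (mem_cons_of_mem x hy)) (by omega)]
    exact ⟨0, Nat.zero_le _, by rw [insertIdx_zero]; congr; omega⟩
  | @cons_cons a b x _ ih =>
    simp only [sum_cons] at hs
    obtain ⟨i, hi, rfl⟩ := ih (fun y hy => hpos y (mem_cons_of_mem x hy)) (by omega)
    exact ⟨i + 1, by simpa using hi, by rw [insertIdx_succ_cons]⟩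

theorem forall₂_modify {R : α → α → Prop} [Std.Refl R] {f : α → α} (hf : ∀ x, R x (f x)) :
    ∀ (l : List α) (i : ℕ), Forall₂ R l (l.modify i f)
  | [], _ => by simp
  | x :: l, 0 => by simpa using forall₂_refl l |>.cons (hf x)
  | x :: l, i + 1 => by simpa using (forall₂_modify hf l i).cons (Std.Refl.refl x)

theorem injOn_modify {f : α → α} (hf : ∀ x, f x ≠ x) (l : List α) :
    Set.InjOn (l.modify · f) (Set.Iio l.length) := by
  intro i hi j _ hij
  by_contra hne
  have := congrArg (·[i]?) hij
  simp only [getElem?_modify_eq, getElem?_modify_ne _ _ (Ne.symm hne), getElem?_eq_getElem hi,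
    Option.map_eq_map, Option.map_some, Option.some.injEq] at this
  exact hf _ this

theorem injOn_insertIdx {x : α} {l : List α} (h : ∀ i (hi : i + 1 < l.length), l[i] ≠ x) :
    Set.InjOn (l.insertIdx · x) (Set.Iio l.length) := by
  suffices ∀ i j, j < l.length → i < j → l.insertIdx i x ≠ l.insertIdx j x by
    intro i hi j hj hij
    by_contra hne
    rcases Nat.lt_or_gt_of_ne hne with hlt | hlt
    · exact this i j hj hlt hij
    · exact this j i hi hlt hij.symm
  intro i j hj hij heq
  have := congrArg (·[i]?) heq
  simp only [getElem?_insertIdx_self, getElem?_insertIdx_of_lt hij] at this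
  rw [if_pos (by omega), getElem?_eq_getElem (by omega), Option.some_inj] at this
  exact h i (by omega) this.symm

theorem insertIdx_length_eq_insertIdx_pred {x : α} {l : List α} (hl : l ≠ [])
    (hx : l.getLast hl = x) : l.insertIdx l.length x = l.insertIdx (l.length - 1) x := by
  obtain ⟨l, rfl⟩ : ∃ l', l = l' ++ [x] := ⟨l.dropLast, by rw [← hx, dropLast_append_getLast]⟩
  rw [insertIdx_length_self]
  simpa [insertIdx] using (modifyTailIdx_add (cons x) 0 l [x]).symm

end List

open List

theorem IsComposition.modify_add_one {n i : ℕ} {a : List ℕ} (ha : IsComposition n a)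
    (hi : i < a.length) : IsComposition (n + 1) (a.modify i (· + 1)) := by
  obtain ⟨l₁, x, l₂, rfl, -, h⟩ := exists_of_modify (· + 1) hi
  obtain ⟨hpos, hsum⟩ := ha
  rw [h]
  refine ⟨fun y hy => ?_, by simp only [sum_append, sum_cons] at hsum ⊢; omega⟩
  rcases mem_append.1 hy with hy | hy
  · exact hpos y (mem_append_left _ hy)
  rcases mem_cons.1 hy with rfl | hy
  · omega
  · exact hpos y (mem_append_right _ (mem_cons_of_mem _ hy))

theorem IsComposition.insertIdx_one {n i : ℕ} {a : List ℕ} (ha : IsComposition n a)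
    (hi : i ≤ a.length) : IsComposition (n + 1) (a.insertIdx i 1) := by
  obtain ⟨hpos, hsum⟩ := ha
  refine ⟨fun y hy => ?_, by rw [sum_insertIdx hi (fun _ _ => AddCommute.all _ _), hsum]; omega⟩
  rcases eq_or_mem_of_mem_insertIdx hy with rfl | hy
  · exact Nat.one_pos
  · exact hpos y hy

theorem mem_domSet_succ_iff {n : ℕ} {a b : List ℕ} (ha : IsComposition n a) :
    b ∈ domSet (n + 1) a ↔
      (∃ i < a.length, b = a.modify i (· + 1)) ∨ ∃ i ≤ a.length, b = a.insertIdx i 1 := by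
  constructor
  · rintro ⟨⟨hbpos, hbsum⟩, b', hsub, hle⟩
    have hsum := ha.2
    have h₁ := hle.sum_le_sum
    have h₂ := hsub.sum_le_sum (fun _ _ => Nat.zero_le _)
    rcases Nat.lt_or_ge b'.sum (n + 1) with hlt | hge
    · obtain rfl := hle.eq_of_sum_le (by omega)
      exact Or.inr (hsub.exists_eq_insertIdx_of_sum_eq_succ hbpos (by omega))
    · obtain rfl := hsub.eq_of_sum_le hbpos (by omega)
      exact Or.inl (hle.exists_eq_modify_of_sum_eq_succ (by omega))
  · rintro (⟨i, hi, rfl⟩ | ⟨i, hi, rfl⟩)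
    · exact ⟨ha.modify_add_one hi, _, Sublist.refl _, forall₂_modify Nat.le_succ a i⟩
    · exact ⟨ha.insertIdx_one hi, a, sublist_insertIdx a i 1, forall₂_refl a⟩

theorem domSet_succ_eq {n : ℕ} {a : List ℕ} (ha : IsComposition n a) :
    domSet (n + 1) a = ↑((Finset.range a.length).image (a.modify · (· + 1)) ∪
      (Finset.range (a.length + 1)).image (a.insertIdx · 1)) := by
  ext b
  simp [mem_domSet_succ_iff ha, eq_comm]

theorem two_le_getElem_of_pairwise_ge {a : List ℕ} (hsort : a.Pairwise (· ≥ ·))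
    (hpen : 2 ≤ a.length → 2 ≤ a[a.length - 2]!) (i : ℕ) (hi : i + 1 < a.length) :
    2 ≤ a[i] := by
  have hp := hpen (by omega)
  rw [getElem!_pos a _ (by omega)] at hp
  rcases Nat.lt_or_ge i (a.length - 2) with hlt | hge
  · exact hp.trans (pairwise_iff_getElem.1 hsort i _ _ _ hlt)
  · simpa [show i = a.length - 2 by omega] using hp

theorem domSet_succ_card_of_last_eq_one (n : ℕ) (a : List ℕ) (hane : a ≠ [])
    (ha : IsComposition n a) (hsort : a.Pairwise (· ≥ ·))
    (hpen : 2 ≤ a.length → 2 ≤ a[a.length - 2]!)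
    (hlast : a.getLast hane = 1) :
    (domSet (n + 1) a).ncard = 2 * a.length := by
  have hlast_mem : a.insertIdx a.length 1 ∈ (Finset.range a.length).image (a.insertIdx · 1) := by
    rw [insertIdx_length_eq_insertIdx_pred hane hlast]
    exact Finset.mem_image_of_mem _ (by simpa using length_pos_iff.2 hane)
  have hdisj : Disjoint ((Finset.range a.length).image (a.modify · (· + 1)))
      ((Finset.range a.length).image (a.insertIdx · 1)) := by
    simp only [Finset.disjoint_left, Finset.mem_image, Finset.mem_range]
    rintro _ ⟨i, -, rfl⟩ ⟨j, hj, h⟩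
    simpa [length_insertIdx_of_le_length hj.le] using congrArg length h
  have hinj := injOn_insertIdx (x := 1) fun i hi => by
    have := two_le_getElem_of_pairwise_ge hsort hpen i hi
    omega
  rw [domSet_succ_eq ha, Set.ncard_coe_finset, Finset.range_add_one, Finset.image_insert,
    Finset.insert_eq_of_mem hlast_mem, Finset.card_union_of_disjoint hdisj,
    Finset.card_image_of_injOn, Finset.card_image_of_injOn, Finset.card_range, two_mul]
  · rwa [Finset.coe_range]
  · rw [Finset.coe_range]
    exact injOn_modify Nat.succ_ne_self a
end

section
/- The number of dominating equivalence classes of compositions of k equals p(k) − p(k−2), the number of integer partitions of k with no part equal to 2, where p denotes the partition function (with p(k−2) = 0 for k < 2). -/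
/-!
Let `D_a = ∑_N |D_N(a)| X^N`. Reading a dominating composition part by part, the first entry `h`
of the target is matched greedily, which gives `(1 - 2X + X^h) D_{h :: t} = X^h D_t`; hence
`∏_{m ∈ a} (1 - 2X + X^m) · D_a = X^k D_[]`, and two compositions of `k` are dominating equivalent
iff these polynomials agree. As `1 - 2X + X^2 = (1 - X)^2`, a part `2` may be traded for two
parts `1`. On multisets without a part `2` the polynomial is injective: the multiplicity of the
root `1` is the number of parts, and then the coefficient of `X^α`, for the least part `α` at
which two multisets differ, counts the occurrences of `α`. So the classes are the partitions
of `k` without a part `2`.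
-/

lemma dominates_nil (b : List ℕ) : Dominates b [] :=
  ⟨[], List.nil_sublist b, .nil⟩

lemma dominates_refl (a : List ℕ) : Dominates a a :=
  ⟨a, .refl a, List.forall₂_same.2 fun _ _ => le_rfl⟩

/-- What is left of the target `a` once a dominating composition has read its part `m`
greedily: the first entry of `a` is matched by `m` whenever `m` is large enough. -/
def residualTarget (m : ℕ) : List ℕ → List ℕ
  | [] => []
  | h :: t => if m < h then h :: t else t

lemma dominates_cons_iff (m : ℕ) (l a : List ℕ) :
    Dominates (m :: l) a ↔ Dominates l (residualTarget m a) := by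
  rcases a with _ | ⟨h, t⟩
  · simp [residualTarget, dominates_nil]
  by_cases hm : m < h
  · rw [residualTarget, if_pos hm]
    refine ⟨fun ⟨b', hb', hf⟩ => ?_,
      fun ⟨b', hb', hf⟩ => ⟨b', hb'.trans (l.sublist_cons_self m), hf⟩⟩
    rcases List.sublist_cons_iff.1 hb' with hb' | ⟨r, rfl, -⟩
    · exact ⟨b', hb', hf⟩
    · rcases hf with _ | ⟨hle, -⟩
      omega
  · rw [residualTarget, if_neg hm]
    refine ⟨fun ⟨b', hb', hf⟩ => ?_,
      fun ⟨b', hb', hf⟩ => ⟨m :: b', hb'.cons_cons m, .cons (by omega) hf⟩⟩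
    rcases List.sublist_cons_iff.1 hb' with hb' | ⟨r, rfl, hr⟩
    · obtain ⟨c, cs, -, hcs, rfl⟩ := List.forall₂_cons_left_iff.1 hf
      exact ⟨cs, (cs.sublist_cons_self c).trans hb', hcs⟩
    · rcases hf with _ | ⟨-, hf⟩
      exact ⟨r, hr, hf⟩

lemma domSet_finite (n : ℕ) (a : List ℕ) : (domSet n a).Finite :=
  (Set.finite_range Composition.blocks).subset
    fun b ⟨⟨hpos, hsum⟩, _⟩ => ⟨⟨b, hpos _, hsum⟩, rfl⟩

lemma eq_nil_of_isComposition_zero {b : List ℕ} (hb : IsComposition 0 b) : b = [] := by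
  rcases b with _ | ⟨x, l⟩
  · rfl
  · have := hb.1 x List.mem_cons_self
    have := hb.2
    simp at this
    omega

lemma domSet_zero_cons (h : ℕ) (t : List ℕ) : domSet 0 (h :: t) = ∅ := by
  refine Set.eq_empty_of_forall_notMem fun b ⟨hb, b', hb', hf⟩ => ?_
  obtain rfl := eq_nil_of_isComposition_zero hb
  obtain rfl := List.sublist_nil.1 hb'
  cases hf

lemma ncard_domSet_zero {k : ℕ} (hk : 0 < k) {a : List ℕ} (ha : IsComposition k a) :
    (domSet 0 a).ncard = 0 := by
  rcases a with _ | ⟨h, t⟩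
  · have := ha.2
    simp at this
    omega
  · rw [domSet_zero_cons, Set.ncard_empty]

lemma domSet_eq_biUnion {N : ℕ} (hN : 0 < N) (a : List ℕ) :
    domSet N a = ⋃ m ∈ Set.Icc 1 N, (m :: ·) '' domSet (N - m) (residualTarget m a) := by
  ext b
  simp only [Set.mem_iUnion, Set.mem_image, exists_prop, Set.mem_Icc]
  constructor
  · rintro ⟨⟨hpos, hsum⟩, hdom⟩
    rcases b with _ | ⟨m, l⟩
    · simp at hsum
      omega
    have hm : 0 < m := hpos m List.mem_cons_self
    rw [List.sum_cons] at hsum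
    exact ⟨m, ⟨hm, by omega⟩, l, ⟨⟨fun x hx => hpos x (.tail m hx), by omega⟩,
      (dominates_cons_iff m l a).1 hdom⟩, rfl⟩
  · rintro ⟨m, ⟨hm, hmN⟩, l, ⟨⟨hpos, hsum⟩, hdom⟩, rfl⟩
    refine ⟨⟨?_, by rw [List.sum_cons, hsum]; omega⟩, (dominates_cons_iff m l a).2 hdom⟩
    exact List.forall_mem_cons.2 ⟨hm, hpos⟩

lemma ncard_domSet_eq_sum {N : ℕ} (hN : 0 < N) (a : List ℕ) :
    (domSet N a).ncard = ∑ m ∈ Finset.Icc 1 N, (domSet (N - m) (residualTarget m a)).ncard := by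
  rw [domSet_eq_biUnion hN, ← Finset.coe_Icc, (Finset.finite_toSet _).ncard_biUnion
    (fun m _ => (domSet_finite _ _).image _), finsum_mem_coe_finset]
  · exact Finset.sum_congr rfl fun m _ => Set.ncard_image_of_injective _ List.cons_injective
  · rintro m - m' - hne
    exact Set.disjoint_left.2 fun _ ⟨_, _, h⟩ ⟨_, _, h'⟩ =>
      hne (List.cons_eq_cons.1 (h.trans h'.symm)).1

section CharPoly

open Polynomial

noncomputable def charFactor (m : ℕ) : ℤ[X] := 1 - 2 * X + X ^ m

noncomputable def charPoly (A : Multiset ℕ) : ℤ[X] := (A.map charFactor).prod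

lemma charPoly_cons (m : ℕ) (A : Multiset ℕ) : charPoly (m ::ₘ A) = charFactor m * charPoly A := by
  simp [charPoly]

lemma charPoly_add (A B : Multiset ℕ) : charPoly (A + B) = charPoly A * charPoly B := by
  simp [charPoly]

lemma charFactor_ne_zero (m : ℕ) : charFactor m ≠ 0 := fun h => by
  have := congrArg (eval 0) h
  rcases m with _ | m <;> simp [charFactor] at this

lemma charPoly_ne_zero (A : Multiset ℕ) : charPoly A ≠ 0 :=
  Multiset.prod_ne_zero fun h =>
    let ⟨m, _, hm⟩ := Multiset.mem_map.1 h
    charFactor_ne_zero m hm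

/-- Modulo `X ^ (α + 1)`, a factor `charFactor m` with `α < m` is `1 - 2X`, and a factor with
`m = α` contributes an extra `X ^ α`, since the other factors have constant term `1`. -/
lemma X_pow_dvd_charPoly_sub {α : ℕ} (hα : 0 < α) {A : Multiset ℕ} (hA : ∀ m ∈ A, α ≤ m) :
    X ^ (α + 1) ∣
      charPoly A - ((1 - 2 * X) ^ Multiset.card A + C (A.count α : ℤ) * X ^ α) := by
  induction A using Multiset.induction_on with
  | empty => simp [charPoly]
  | cons m A ih =>
    obtain ⟨R, hR⟩ := ih fun x hx => hA x (Multiset.mem_cons_of_mem hx)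
    rw [charPoly_cons, Multiset.card_cons, pow_succ]
    rcases (hA m (Multiset.mem_cons_self m A)).lt_or_eq with hlt | rfl
    · have hpow : (X : ℤ[X]) ^ m = X ^ (α + 1) * X ^ (m - (α + 1)) := by
        rw [← pow_add]; congr 1; omega
      rw [Multiset.count_cons_of_ne hlt.ne]
      refine ⟨-2 * C (A.count α : ℤ) + (1 - 2 * X) * R + X ^ (m - (α + 1)) * charPoly A, ?_⟩
      rw [charFactor]
      linear_combination (1 - 2 * X) * hR + charPoly A * hpow
    · obtain ⟨S, hS⟩ : X ∣ (1 - 2 * X : ℤ[X]) ^ Multiset.card A - 1 := by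
        simpa using
          dvd_trans ⟨-2, by ring⟩ (sub_dvd_pow_sub_pow (1 - 2 * X : ℤ[X]) 1 (Multiset.card A))
      have hpow : (X : ℤ[X]) ^ α * X ^ α = X ^ (α + 1) * X ^ (α - 1) := by
        rw [← pow_add, ← pow_add]; congr 1; omega
      rw [Multiset.count_cons_self, Nat.cast_succ, map_add, map_one]
      refine ⟨-2 * C (A.count α : ℤ) + (1 - 2 * X) * R + S + C (A.count α : ℤ) * X ^ (α - 1)
        + X ^ α * R, ?_⟩
      rw [charFactor]
      linear_combination (1 - 2 * X + X ^ α) * hR + X ^ α * hS + C (A.count α : ℤ) * hpow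

lemma coeff_charPoly_of_le {α : ℕ} (hα : 0 < α) {A : Multiset ℕ} (hA : ∀ m ∈ A, α ≤ m) :
    (charPoly A).coeff α = ((1 - 2 * X : ℤ[X]) ^ Multiset.card A).coeff α + (A.count α : ℤ) := by
  obtain ⟨R, hR⟩ := X_pow_dvd_charPoly_sub hα hA
  rw [sub_eq_iff_eq_add'] at hR
  simp [hR, coeff_X_pow_mul']

lemma eq_of_charPoly_eq_of_card_eq {A B : Multiset ℕ} (hA : ∀ m ∈ A, 0 < m) (hB : ∀ m ∈ B, 0 < m)
    (hcard : Multiset.card A = Multiset.card B) (h : charPoly A = charPoly B) : A = B := by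
  classical
  -- Cancel the common part; the least part `α` of what remains has the same multiplicity on
  -- both sides by `coeff_charPoly_of_le`, although it occurs on exactly one side.
  have hA' : A = (A - B) + A ∩ B := (Multiset.sub_add_inter A B).symm
  have hB' : B = (B - A) + A ∩ B := by
    rw [Multiset.inter_comm]
    exact (Multiset.sub_add_inter B A).symm
  have hcard' : Multiset.card (A - B) = Multiset.card (B - A) := by
    have := congrArg Multiset.card hA'
    have := congrArg Multiset.card hB'
    simp only [Multiset.card_add] at *
    omega
  have h' : charPoly (A - B) = charPoly (B - A) :=
    mul_right_cancel₀ (charPoly_ne_zero (A ∩ B)) (by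
      rw [← charPoly_add, ← charPoly_add, ← hA', ← hB', h])
  by_contra hne
  have hex : ∃ α, α ∈ (A - B) + (B - A) := Multiset.exists_mem_of_ne_zero fun h0 => by
    rw [add_eq_zero, tsub_eq_zero_iff_le, tsub_eq_zero_iff_le] at h0
    exact hne (le_antisymm h0.1 h0.2)
  obtain ⟨α, hmem, hmin⟩ : ∃ α ∈ (A - B) + (B - A), ∀ m ∈ (A - B) + (B - A), α ≤ m :=
    ⟨Nat.find hex, Nat.find_spec hex, fun m hm => Nat.find_min' hex hm⟩
  have hα : 0 < α := by
    rcases Multiset.mem_add.1 hmem with h | h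
    · exact hA α (Multiset.mem_of_le (Multiset.sub_le_self A B) h)
    · exact hB α (Multiset.mem_of_le (Multiset.sub_le_self B A) h)
  have hcount := coeff_charPoly_of_le hα (fun m hm => hmin m (Multiset.mem_add.2 (.inl hm)))
  rw [h', coeff_charPoly_of_le hα (fun m hm => hmin m (Multiset.mem_add.2 (.inr hm))), hcard',
    add_right_inj, Nat.cast_inj, Multiset.count_sub, Multiset.count_sub] at hcount
  rw [Multiset.mem_add, ← Multiset.count_pos, ← Multiset.count_pos, Multiset.count_sub,
    Multiset.count_sub] at hmem
  omega

lemma rootMultiplicity_one_charFactor {m : ℕ} (h2 : m ≠ 2) :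
    rootMultiplicity 1 (charFactor m) = 1 := by
  have hroot : (charFactor m).IsRoot 1 := by simp [charFactor]
  have hder : ¬ (derivative (charFactor m)).IsRoot 1 := by
    simp [charFactor, derivative_X_pow]
    omega
  have := (rootMultiplicity_pos (charFactor_ne_zero m)).2 hroot
  have := (one_lt_rootMultiplicity_iff_isRoot (charFactor_ne_zero m)).not.2 fun h => hder h.2
  omega

lemma rootMultiplicity_one_charPoly {A : Multiset ℕ} (h2 : 2 ∉ A) :
    rootMultiplicity 1 (charPoly A) = Multiset.card A := by
  induction A using Multiset.induction_on with
  | empty => simp [charPoly]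
  | cons m A ih =>
    rw [charPoly_cons,
      rootMultiplicity_mul (mul_ne_zero (charFactor_ne_zero m) (charPoly_ne_zero A)),
      rootMultiplicity_one_charFactor (by rintro rfl; exact h2 (Multiset.mem_cons_self 2 A)),
      ih fun h => h2 (Multiset.mem_cons_of_mem h),
      Multiset.card_cons, add_comm]

lemma eq_of_charPoly_eq_of_two_notMem {A B : Multiset ℕ} (hA : ∀ m ∈ A, 0 < m) (hA2 : 2 ∉ A)
    (hB : ∀ m ∈ B, 0 < m) (hB2 : 2 ∉ B) (h : charPoly A = charPoly B) : A = B :=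
  eq_of_charPoly_eq_of_card_eq hA hB (by rw [← rootMultiplicity_one_charPoly hA2,
    ← rootMultiplicity_one_charPoly hB2, h]) h


end CharPoly

def splitTwos (A : Multiset ℕ) : Multiset ℕ :=
  A.bind fun m => if m = 2 then {1, 1} else {m}

lemma mem_splitTwos {A : Multiset ℕ} {x : ℕ} :
    x ∈ splitTwos A ↔ x = 1 ∧ 2 ∈ A ∨ x ∈ A ∧ x ≠ 2 := by
  simp only [splitTwos, Multiset.mem_bind]
  constructor
  · rintro ⟨m, hm, hx⟩
    split_ifs at hx with h2 <;> simp_all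
  · rintro (⟨rfl, h⟩ | ⟨h, h2⟩)
    · exact ⟨2, h, by simp⟩
    · exact ⟨x, h, by simp [h2]⟩

lemma two_notMem_splitTwos (A : Multiset ℕ) : 2 ∉ splitTwos A := by
  simp [mem_splitTwos]

lemma pos_of_mem_splitTwos {A : Multiset ℕ} (hA : ∀ m ∈ A, 0 < m) {x : ℕ}
    (hx : x ∈ splitTwos A) : 0 < x := by
  rcases mem_splitTwos.1 hx with ⟨rfl, -⟩ | ⟨h, -⟩
  exacts [one_pos, hA x h]

lemma sum_splitTwos (A : Multiset ℕ) : (splitTwos A).sum = A.sum := by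
  rw [splitTwos, Multiset.sum_bind]
  conv_rhs => rw [← Multiset.map_id' A]
  congr 1
  refine Multiset.map_congr rfl fun m _ => ?_
  split_ifs with h <;> simp [h]

lemma splitTwos_of_two_notMem {A : Multiset ℕ} (h : 2 ∉ A) : splitTwos A = A := by
  rw [splitTwos, Multiset.bind_congr fun m hm => if_neg (ne_of_mem_of_not_mem hm h),
    Multiset.bind_singleton, Multiset.map_id']

lemma charPoly_splitTwos (A : Multiset ℕ) : charPoly (splitTwos A) = charPoly A := by
  rw [charPoly, splitTwos, Multiset.map_bind, Multiset.prod_bind, charPoly]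
  congr 1
  refine Multiset.map_congr rfl fun m _ => ?_
  split_ifs with h
  · simp [h, charFactor]
    ring
  · simp

section Series

open PowerSeries

noncomputable def domSeries (a : List ℕ) : ℤ⟦X⟧ := mk fun N => ((domSet N a).ncard : ℤ)

variable {R : Type*} [CommSemiring R]

lemma coeff_sum_X_pow_mul (s : Finset ℕ) (φ : R⟦X⟧) (N : ℕ) :
    coeff N ((∑ m ∈ s, X ^ m) * φ) = ∑ m ∈ s with m ≤ N, coeff (N - m) φ := by
  rw [Finset.sum_mul, map_sum, Finset.sum_filter]
  exact Finset.sum_congr rfl fun m _ => coeff_X_pow_mul' φ m N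

lemma coeff_X_pow_mul_mk_one_mul (h N : ℕ) (φ : R⟦X⟧) :
    coeff N (X ^ h * mk 1 * φ) = ∑ m ∈ Finset.Icc h N, coeff (N - m) φ := by
  rw [mul_assoc, coeff_X_pow_mul']
  split_ifs with hh
  · rw [coeff_mul, Finset.Nat.sum_antidiagonal_eq_sum_range_succ
      (fun i j => coeff i (mk 1 : R⟦X⟧) * coeff j φ), ← Finset.Ico_add_one_right_eq_Icc,
      Finset.sum_Ico_eq_sum_range, show N + 1 - h = N - h + 1 by omega]
    simp [Nat.sub_sub]
  · rw [Finset.Icc_eq_empty (by omega), Finset.sum_empty]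

lemma domSeries_cons {h : ℕ} (hh : 0 < h) (t : List ℕ) :
    domSeries (h :: t) =
      (∑ m ∈ Finset.Ico 1 h, X ^ m) * domSeries (h :: t) + X ^ h * mk 1 * domSeries t := by
  ext N
  rw [map_add, coeff_sum_X_pow_mul, coeff_X_pow_mul_mk_one_mul]
  simp only [domSeries, coeff_mk]
  rcases Nat.eq_zero_or_pos N with rfl | hN
  · rw [domSet_zero_cons, Finset.Icc_eq_empty (by omega), Finset.sum_empty,
      Finset.sum_eq_zero fun m hm => absurd (Finset.mem_filter.1 hm) (by simp; omega)]
    simp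
  rw [ncard_domSet_eq_sum hN, Nat.cast_sum, ← Finset.sum_filter_add_sum_filter_not _ (· < h)]
  congr 1
  · refine Finset.sum_congr (by ext; simp; omega) fun m hm => ?_
    simp only [Finset.mem_filter, Finset.mem_Ico] at hm
    rw [residualTarget, if_pos hm.1.2]
  · refine Finset.sum_congr (by ext; simp; omega) fun m hm => ?_
    simp only [Finset.mem_Icc] at hm
    rw [residualTarget, if_neg (by omega)]

lemma charFactor_mul_domSeries_cons {h : ℕ} (hh : 0 < h) (t : List ℕ) :
    (1 - 2 * X + X ^ h) * domSeries (h :: t) = X ^ h * domSeries t := by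
  have hrec := domSeries_cons hh t
  have hgeom := geom_sum_Ico_mul (X : ℤ⟦X⟧) hh
  have hU := mk_one_mul_one_sub_eq_one ℤ
  linear_combination (1 - X) * hrec - domSeries (h :: t) * hgeom + X ^ h * domSeries t * hU

lemma charPoly_mul_domSeries (a : List ℕ) (ha : ∀ x ∈ a, 0 < x) :
    (charPoly a : ℤ⟦X⟧) * domSeries a = X ^ a.sum * domSeries [] := by
  induction a with
  | nil => simp [charPoly]
  | cons h t ih =>
    rw [← Multiset.cons_coe, charPoly_cons, Polynomial.coe_mul, List.sum_cons, pow_add]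
    have hc : (charFactor h : ℤ⟦X⟧) = 1 - 2 * X + X ^ h := by
      rw [charFactor, ← Polynomial.coeToPowerSeries.ringHom_apply]
      simp only [map_add, map_sub, map_mul, map_pow, map_one, map_ofNat,
        Polynomial.coeToPowerSeries.ringHom_apply, Polynomial.coe_X]
    have hh := ha h List.mem_cons_self
    linear_combination (charPoly t : ℤ⟦X⟧) * domSeries (h :: t) * hc
      + (charPoly t : ℤ⟦X⟧) * charFactor_mul_domSeries_cons hh t
      + X ^ h * ih fun x hx => ha x (.tail h hx)

lemma domSeries_ne_zero {k : ℕ} {a : List ℕ} (ha : IsComposition k a) : domSeries a ≠ 0 := by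
  intro h
  have hk := congrArg (PowerSeries.coeff k) h
  rw [domSeries, PowerSeries.coeff_mk, map_zero, Nat.cast_eq_zero,
    Set.ncard_eq_zero (domSet_finite k a)] at hk
  exact hk.subset ⟨ha, dominates_refl a⟩

lemma domSeries_eq_iff_charPoly_eq {k : ℕ} {a b : List ℕ} (ha : IsComposition k a)
    (hb : IsComposition k b) : domSeries a = domSeries b ↔ charPoly a = charPoly b := by
  have hA := charPoly_mul_domSeries a ha.1
  have hB := charPoly_mul_domSeries b hb.1
  rw [ha.2] at hA
  rw [hb.2] at hB
  constructor
  · intro h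
    refine Polynomial.coe_inj.1 (mul_right_cancel₀ (domSeries_ne_zero ha) ?_)
    rw [hA, h, hB]
  · intro h
    refine mul_left_cancel₀ (Polynomial.coe_eq_zero_iff.not.2 (charPoly_ne_zero a)) ?_
    rw [hA, h, hB]

end Series

lemma domEquiv_iff_splitTwos_eq {k : ℕ} (hk : 0 < k) {a b : List ℕ} (ha : IsComposition k a)
    (hb : IsComposition k b) :
    (∀ N : ℕ, 0 < N → (domSet N a).ncard = (domSet N b).ncard) ↔ splitTwos a = splitTwos b := by
  have hseries : (∀ N : ℕ, 0 < N → (domSet N a).ncard = (domSet N b).ncard) ↔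
      domSeries a = domSeries b := by
    rw [PowerSeries.ext_iff]
    refine ⟨fun h N => ?_, fun h N _ => by simpa [domSeries] using h N⟩
    rcases Nat.eq_zero_or_pos N with rfl | hN
    · simp [domSeries, ncard_domSet_zero hk ha, ncard_domSet_zero hk hb]
    · simp [domSeries, h N hN]
  rw [hseries, domSeries_eq_iff_charPoly_eq ha hb, ← charPoly_splitTwos (a : Multiset ℕ),
    ← charPoly_splitTwos (b : Multiset ℕ)]
  exact ⟨eq_of_charPoly_eq_of_two_notMem (fun _ => pos_of_mem_splitTwos ha.1)
    (two_notMem_splitTwos _) (fun _ => pos_of_mem_splitTwos hb.1) (two_notMem_splitTwos _),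
    congrArg charPoly⟩

def splitTwosPartition {k : ℕ} (a : {l : List ℕ // IsComposition k l}) : Nat.Partition k where
  parts := splitTwos a.1
  parts_pos := pos_of_mem_splitTwos a.2.1
  parts_sum := by rw [sum_splitTwos, Multiset.sum_coe, a.2.2]

lemma range_splitTwosPartition (k : ℕ) :
    Set.range (splitTwosPartition (k := k)) = {P | 2 ∉ P.parts} := by
  ext P
  constructor
  · rintro ⟨a, rfl⟩
    exact two_notMem_splitTwos (a.1 : Multiset ℕ)
  intro hP
  refine ⟨⟨P.parts.toList, fun x hx => P.parts_pos (Multiset.mem_toList.1 hx), ?_⟩, ?_⟩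
  · rw [← Multiset.sum_coe, Multiset.coe_toList, P.parts_sum]
  · exact Nat.Partition.ext (by simp [splitTwosPartition, splitTwos_of_two_notMem hP])

def partitionWithTwoEquiv {k : ℕ} (hk : 2 ≤ k) :
    {P : Nat.Partition k // 2 ∈ P.parts} ≃ Nat.Partition (k - 2) where
  toFun P := ⟨P.1.parts.erase 2, fun hi => P.1.parts_pos (Multiset.mem_of_mem_erase hi), by
    have := congrArg Multiset.sum (Multiset.cons_erase P.2)
    rw [Multiset.sum_cons, P.1.parts_sum] at this
    omega⟩
  invFun Q := ⟨⟨2 ::ₘ Q.parts, fun hi => (Multiset.mem_cons.1 hi).elim (· ▸ two_pos) Q.parts_pos,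
    by rw [Multiset.sum_cons, Q.parts_sum]; omega⟩, Multiset.mem_cons_self 2 _⟩
  left_inv P := Subtype.ext (Nat.Partition.ext (Multiset.cons_erase P.2))
  right_inv Q := Nat.Partition.ext (Multiset.erase_cons_head 2 Q.parts)

lemma card_partition_two_notMem (k : ℕ) :
    Nat.card {P : Nat.Partition k // 2 ∉ P.parts} = Fintype.card (Nat.Partition k) -
      (if 2 ≤ k then Fintype.card (Nat.Partition (k - 2)) else 0) := by
  classical
  rw [Nat.card_eq_fintype_card, Fintype.card_subtype_compl]
  congr 1
  split_ifs with hk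
  · exact Fintype.card_congr (partitionWithTwoEquiv hk)
  · exact Fintype.card_eq_zero_iff.2 ⟨fun ⟨P, hP⟩ => by
      have := Multiset.le_sum_of_mem hP
      rw [P.parts_sum] at this
      omega⟩

theorem card_domEquiv_classes (k : ℕ) (hk : 0 < k) :
    Nat.card (Quot fun a b : {l : List ℕ // IsComposition k l} =>
        ∀ N : ℕ, 0 < N → (domSet N a.1).ncard = (domSet N b.1).ncard) =
      Fintype.card (Nat.Partition k) -
        (if 2 ≤ k then Fintype.card (Nat.Partition (k - 2)) else 0) := by
  have hrel : (fun a b : {l : List ℕ // IsComposition k l} =>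
      ∀ N : ℕ, 0 < N → (domSet N a.1).ncard = (domSet N b.1).ncard) =
      Setoid.ker splitTwosPartition := by
    funext a b
    exact propext ((domEquiv_iff_splitTwos_eq hk a.2 b.2).trans
      (Setoid.ker_def (f := splitTwosPartition).trans Nat.Partition.ext_iff).symm)
  rw [hrel, ← card_partition_two_notMem]
  calc Nat.card (Quot (Setoid.ker splitTwosPartition))
      = Nat.card (Set.range (splitTwosPartition (k := k))) :=
        Nat.card_congr (Setoid.quotientKerEquivRange _)
    _ = Nat.card {P : Nat.Partition k // 2 ∉ P.parts} := by rw [range_splitTwosPartition]; rfl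
end
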